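/- Let p(x) = (1/2)e^{-|x|}. For any function u ∈ H¹(ℝ) and a.e. x, p * (u² + (1/2)u_x²)(x) ≥ (1/2)u(x)², and also p_± * (u² + (1/2)u_x²)(x) ≥ (1/4)u(x)². -/

import Mathlib

open MeasureTheory Real

/-- The kernel `p(x) = (1/2) e^{-|x|}`. -/
noncomputable def pker (x : ℝ) : ℝ := (1/2) * Real.exp (-|x|)

/-- Spatial convolution `(g * f)(x) = ∫ g(x-y) f(y) dy`. -/
noncomputable def conv (g f : ℝ → ℝ) (x : ℝ) : ℝ := ∫ y : ℝ, g (x - y) * f y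

/-- `p_+ * f (x) = (1/2) e^{-x} ∫_{-∞}^{x} e^{y} f(y) dy`. -/
noncomputable def pPlus (f : ℝ → ℝ) (x : ℝ) : ℝ :=
  (1/2) * Real.exp (-x) * ∫ y in Set.Iic x, Real.exp y * f y

/-- `p_- * f (x) = (1/2) e^{x} ∫_{-∞}^{-x} e^{y} f(-y) dy`. -/
noncomputable def pMinus (f : ℝ → ℝ) (x : ℝ) : ℝ :=
  (1/2) * Real.exp x * ∫ y in Set.Iic (-x), Real.exp y * f (-y)

/-!
Since `u² + u_x²/2 - (u² + 2 u u_x)/2 = (u - u_x)²/2 ≥ 0`, the weighted density `e^y (u² + u_y²/2)`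
dominates half the derivative of `e^y u(y)²`. That function and its derivative are integrable on
`(-∞, x]`, so `e^y u(y)² → 0` as `y → -∞`, and integrating gives
`∫_{-∞}^x e^y (u² + u_y²/2) ≥ e^x u(x)²/2`, i.e. the bound for `p_+`.
The bound for `p_-` is the same one applied to `y ↦ u(-y)`, and `p * f = p_+ * f + p_- * f`.
-/

open Filter Set Topology

lemma integrableOn_Iic_exp_mul {f : ℝ → ℝ} {x : ℝ} (hf : IntegrableOn f (Iic x)) :
    IntegrableOn (fun y => exp y * f y) (Iic x) :=
  hf.bdd_mul (c := exp x) continuous_exp.aestronglyMeasurable <|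
    ae_restrict_of_forall_mem measurableSet_Iic fun y hy => by
      rw [norm_of_nonneg (exp_pos y).le]
      exact exp_le_exp.2 hy

lemma exp_mul_sq_div_two_le_setIntegral_Iic {u u' : ℝ → ℝ} {x : ℝ}
    (hderiv : ∀ y ∈ Iic x, HasDerivAt u (u' y) y)
    (hu : MemLp u 2 (volume.restrict (Iic x))) (hu' : MemLp u' 2 (volume.restrict (Iic x))) :
    exp x * u x ^ 2 / 2 ≤ ∫ y in Iic x, exp y * (u y ^ 2 + 1/2 * u' y ^ 2) := by
  set g : ℝ → ℝ := fun y => exp y * u y ^ 2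
  have hg : ∀ y ∈ Iic x, HasDerivAt g (exp y * (u y ^ 2 + 2 * (u y * u' y))) y := fun y hy =>
    ((hasDerivAt_exp y).mul ((hderiv y hy).fun_pow 2)).congr_deriv (by ring)
  have hsq : IntegrableOn (fun y => u y ^ 2) (Iic x) := hu.integrable_sq
  have hg'int : IntegrableOn (fun y => exp y * (u y ^ 2 + 2 * (u y * u' y))) (Iic x) :=
    integrableOn_Iic_exp_mul (hsq.add ((hu.integrable_mul hu').const_mul 2))
  have hlim : Tendsto g atBot (𝓝 0) :=
    tendsto_zero_of_hasDerivAt_of_integrableOn_Iic hg hg'int (integrableOn_Iic_exp_mul hsq)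
  have hFTC : ∫ y in Iic x, exp y * (u y ^ 2 + 2 * (u y * u' y)) = g x := by
    simpa using integral_Iic_of_hasDerivAt_of_tendsto' hg hg'int hlim
  calc exp x * u x ^ 2 / 2 = ∫ y in Iic x, exp y * (u y ^ 2 + 2 * (u y * u' y)) / 2 := by
        rw [integral_div, hFTC]
    _ ≤ ∫ y in Iic x, exp y * (u y ^ 2 + 1/2 * u' y ^ 2) :=
        setIntegral_mono_on (hg'int.div_const 2)
          (integrableOn_Iic_exp_mul (hsq.add (hu'.integrable_sq.const_mul _))) measurableSet_Iic
          fun y _ => by nlinarith [mul_nonneg (exp_pos y).le (sq_nonneg (u y - u' y))]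

section H1

variable {u u' : ℝ → ℝ} (hderiv : ∀ y, HasDerivAt u (u' y) y)
  (hu : MemLp u 2 (volume : Measure ℝ)) (hu' : MemLp u' 2 (volume : Measure ℝ))
include hderiv hu hu'

lemma quarter_sq_le_pPlus (x : ℝ) :
    1/4 * u x ^ 2 ≤ pPlus (fun y => u y ^ 2 + 1/2 * u' y ^ 2) x := by
  have key := exp_mul_sq_div_two_le_setIntegral_Iic (fun y _ => hderiv y)
    (hu.restrict (Iic x)) (hu'.restrict (Iic x))
  calc 1/4 * u x ^ 2 = 1/2 * exp (-x) * (exp x * u x ^ 2 / 2) := by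
        rw [exp_neg]; field_simp; ring
    _ ≤ _ := by unfold pPlus; gcongr

lemma quarter_sq_le_pMinus (x : ℝ) :
    1/4 * u x ^ 2 ≤ pMinus (fun y => u y ^ 2 + 1/2 * u' y ^ 2) x := by
  have hneg := Measure.measurePreserving_neg (volume : Measure ℝ)
  have key := quarter_sq_le_pPlus (u := fun y => u (-y)) (u' := fun y => -u' (-y))
    (fun y => by simpa [Function.comp_def] using (hderiv (-y)).comp y (hasDerivAt_neg y))
    (hu.comp_measurePreserving hneg) (hu'.comp_measurePreserving hneg).neg (-x)
  simpa only [pPlus, pMinus, neg_neg, neg_sq] using key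

end H1

lemma norm_pker_le (x : ℝ) : ‖pker x‖ ≤ 1/2 := by
  have : exp (-|x|) ≤ 1 := exp_le_one_iff.2 (neg_nonpos.2 (abs_nonneg x))
  rw [norm_of_nonneg (by unfold pker; positivity)]
  unfold pker
  linarith

lemma conv_pker_eq_pPlus_add_pMinus {f : ℝ → ℝ} (hf : Integrable f) (x : ℝ) :
    conv pker f x = pPlus f x + pMinus f x := by
  have hint : Integrable (fun y => pker (x - y) * f y) :=
    hf.bdd_mul (by unfold pker; fun_prop) (ae_of_all _ fun y => norm_pker_le (x - y))
  have hIic : ∫ y in Iic x, pker (x - y) * f y = pPlus f x := by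
    rw [pPlus, ← integral_const_mul]
    refine setIntegral_congr_fun measurableSet_Iic fun y hy => ?_
    rw [pker, abs_of_nonneg (sub_nonneg.2 hy), neg_sub, exp_sub, exp_neg]
    field_simp
  have hIoi : ∫ y in Ioi x, pker (x - y) * f y = pMinus f x := by
    have hreflect : ∫ y in Iic (-x), exp y * f (-y) = ∫ y in Ioi x, exp (-y) * f y := by
      simpa using integral_comp_neg_Iic (-x) (fun y => exp (-y) * f y)
    rw [pMinus, hreflect, ← integral_const_mul]
    refine setIntegral_congr_fun measurableSet_Ioi fun y hy => ?_
    rw [pker, abs_of_neg (sub_neg.2 hy), neg_neg, exp_sub, exp_neg]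
    field_simp
  rw [← hIic, ← hIoi, ← setIntegral_union (Iic_disjoint_Ioi le_rfl) measurableSet_Ioi
    hint.integrableOn hint.integrableOn, Iic_union_Ioi, setIntegral_univ, conv]

/-- For `u ∈ H¹(ℝ)`, a.e. `x`: `p * (u² + u_x²/2)(x) ≥ u(x)²/2` and
`p_± * (u² + u_x²/2)(x) ≥ u(x)²/4`. -/
theorem conv_lower_bounds (u : ℝ → ℝ)
    (hdiff : Differentiable ℝ u)
    (hu : MemLp u 2 (volume : Measure ℝ))
    (hux : MemLp (deriv u) 2 (volume : Measure ℝ)) :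
    ∀ᵐ x : ℝ,
      (1/2) * (u x)^2 ≤ conv pker (fun y => (u y)^2 + (1/2) * (deriv u y)^2) x ∧
      (1/4) * (u x)^2 ≤ pPlus (fun y => (u y)^2 + (1/2) * (deriv u y)^2) x ∧
      (1/4) * (u x)^2 ≤ pMinus (fun y => (u y)^2 + (1/2) * (deriv u y)^2) x := by
  have hderiv : ∀ y, HasDerivAt u (deriv u y) y := fun y => (hdiff y).hasDerivAt
  have hf : Integrable (fun y => (u y)^2 + (1/2) * (deriv u y)^2) :=
    hu.integrable_sq.add (hux.integrable_sq.const_mul _)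
  refine ae_of_all _ fun x => ?_
  have hplus := quarter_sq_le_pPlus hderiv hu hux x
  have hminus := quarter_sq_le_pMinus hderiv hu hux x
  refine ⟨?_, hplus, hminus⟩
  rw [conv_pker_eq_pPlus_add_pMinus hf]
  linarith
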